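/- Let X be a set with a fixed total strict order <_p, P the set of total strict orders on X, and ≤^p the lattice order on P defined by q ≤^p r iff (x <_p y and x <_r y ⟹ x <_q y for all x,y). For any subset Q ⊆ P, the join ∨Q in (P, ≤^p) satisfies: L(∨Q) is the transitive-closure-style closure of ∪_{q∈Q} L(q), i.e. (x,y) ∈ L(∨Q) with x <_p y iff there exist x = t₀ <_p t₁ <_p ⋯ <_p tₙ = y with each (tᵢ, tᵢ₊₁) ∈ ∪_{q∈Q} L(q). -/

import Mathlib

/-- The order `≤^p` on total strict orders: `q ≤^p r` iff
`x <_p y` and `x <_r y` imply `x <_q y`. -/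
def OrdLe {X : Type*} (ltp : X → X → Prop)
    (q r : {r : X → X → Prop // IsStrictTotalOrder X r}) : Prop :=
  ∀ x y, ltp x y → r.val x y → q.val x y

/-- `L(q) = {(x,y) : x <_p y and y <_q x}`. -/
def OrdL {X : Type*} (ltp : X → X → Prop)
    (q : {r : X → X → Prop // IsStrictTotalOrder X r}) : Set (X × X) :=
  {p | ltp p.1 p.2 ∧ q.val p.2 p.1}

/-- One step of the closure: a single inversion pair coming from some `q ∈ Q`. -/
private def Step {X : Type*} (ltp : X → X → Prop)
    (Q : Set {r : X → X → Prop // IsStrictTotalOrder X r}) (a b : X) : Prop :=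
  ltp a b ∧ ∃ q ∈ Q, (a, b) ∈ OrdL ltp q

/-- Each `L(q)` splits over intermediate points. -/
private lemma lq_split {X : Type*} (ltp : X → X → Prop) [IsStrictTotalOrder X ltp]
    (q : {r : X → X → Prop // IsStrictTotalOrder X r}) {x y z : X}
    (hxy : ltp x y) (hyz : ltp y z) (h : (x, z) ∈ OrdL ltp q) :
    (x, y) ∈ OrdL ltp q ∨ (y, z) ∈ OrdL ltp q := by
  obtain ⟨_, hq⟩ := h
  haveI := q.2
  rcases trichotomous_of q.val y x with h1 | h1 | h1
  · exact Or.inl ⟨hxy, h1⟩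
  · subst h1; exact absurd hxy (irrefl _)
  · exact Or.inr ⟨hyz, _root_.trans hq h1⟩

private lemma step_split {X : Type*} (ltp : X → X → Prop) [IsStrictTotalOrder X ltp]
    (Q : Set {r : X → X → Prop // IsStrictTotalOrder X r}) {x y z : X}
    (hxy : ltp x y) (hyz : ltp y z) (h : Step ltp Q x z) :
    Step ltp Q x y ∨ Step ltp Q y z := by
  obtain ⟨_, q, hq, hmem⟩ := h
  rcases lq_split ltp q hxy hyz hmem with h | h
  · exact Or.inl ⟨hxy, q, hq, h⟩
  · exact Or.inr ⟨hyz, q, hq, h⟩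

private lemma tg_ltp {X : Type*} (ltp : X → X → Prop) [IsStrictTotalOrder X ltp]
    (Q : Set {r : X → X → Prop // IsStrictTotalOrder X r}) {a b : X}
    (h : Relation.TransGen (Step ltp Q) a b) : ltp a b := by
  induction h with
  | single h => exact h.1
  | tail _ hbc ih => exact _root_.trans ih hbc.1

/-- The transitive closure of `Step` splits over intermediate points. -/
private lemma tg_split {X : Type*} (ltp : X → X → Prop) [IsStrictTotalOrder X ltp]
    (Q : Set {r : X → X → Prop // IsStrictTotalOrder X r}) {x y z : X}
    (h : Relation.TransGen (Step ltp Q) x z) (hxy : ltp x y) (hyz : ltp y z) :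
    Relation.TransGen (Step ltp Q) x y ∨ Relation.TransGen (Step ltp Q) y z := by
  revert hyz
  induction h with
  | single h =>
    intro hyz
    rcases step_split ltp Q hxy hyz h with h' | h'
    · exact Or.inl (.single h')
    · exact Or.inr (.single h')
  | @tail b c hab hbc ih =>
    intro hyc
    rcases trichotomous_of ltp y b with h1 | h1 | h1
    · rcases ih h1 with h' | h'
      · exact Or.inl h'
      · exact Or.inr (h'.tail hbc)
    · subst h1; exact Or.inl hab
    · rcases step_split ltp Q h1 hyc hbc with h' | h'
      · exact Or.inl (hab.tail h')
      · exact Or.inr (.single h')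

private lemma tg_of_chain {X : Type*} (ltp : X → X → Prop)
    (Q : Set {r : X → X → Prop // IsStrictTotalOrder X r}) {x y : X}
    (h : ∃ (m : ℕ) (t : ℕ → X), 0 < m ∧ t 0 = x ∧ t m = y ∧
        ∀ i < m, ltp (t i) (t (i + 1)) ∧ ∃ q ∈ Q, (t i, t (i + 1)) ∈ OrdL ltp q) :
    Relation.TransGen (Step ltp Q) x y := by
  obtain ⟨m, t, hm, h0, hM, hs⟩ := h
  subst h0; subst hM
  obtain ⟨m', rfl⟩ : ∃ m', m = m' + 1 := ⟨m - 1, (Nat.succ_pred_eq_of_pos hm).symm⟩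
  clear hm
  induction m' with
  | zero => exact .single (hs 0 Nat.one_pos)
  | succ n ih =>
    exact (ih (fun i hi => hs i (hi.trans (Nat.lt_succ_self _)))).tail
      (hs (n + 1) (Nat.lt_succ_self _))

private lemma chain_of_tg {X : Type*} (ltp : X → X → Prop)
    (Q : Set {r : X → X → Prop // IsStrictTotalOrder X r}) {x y : X}
    (h : Relation.TransGen (Step ltp Q) x y) :
    ∃ (m : ℕ) (t : ℕ → X), 0 < m ∧ t 0 = x ∧ t m = y ∧
      ∀ i < m, ltp (t i) (t (i + 1)) ∧ ∃ q ∈ Q, (t i, t (i + 1)) ∈ OrdL ltp q := by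
  induction h with
  | @single b h =>
    refine ⟨1, fun i => if i = 0 then x else b, Nat.one_pos, by simp, by simp, ?_⟩
    intro i hi
    interval_cases i
    exact h
  | @tail b c hab hbc ih =>
    obtain ⟨m, t, hm, h0, hM, hs⟩ := ih
    refine ⟨m + 1, fun i => if i ≤ m then t i else c, Nat.succ_pos m,
      by simp [h0], by simp, ?_⟩
    intro i hi
    rcases Nat.lt_succ_iff_lt_or_eq.mp hi with hi | rfl
    · have h1 : i ≤ m := hi.le
      have h2 : i + 1 ≤ m := hi
      simpa [h1, h2] using hs i hi
    · have h2 : ¬ (i + 1 ≤ i) := by omega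
      simp only [if_pos (le_refl i), if_neg h2, hM]
      exact hbc

/-- For a subset `Q`, any join `j = ∨Q` in `(P, ≤^p)` satisfies: `L(j)` is the
closure of `∪_{q∈Q} L(q)`, i.e. `(x,y) ∈ L(j)` iff there is a `<_p`-chain
`x = t₀ <_p t₁ <_p ⋯ <_p tₘ = y` with each `(tᵢ,tᵢ₊₁)` in some `L(q)`, `q ∈ Q`. -/
theorem stmt2 {X : Type*} (ltp : X → X → Prop) [IsStrictTotalOrder X ltp]
    (Q : Set {r : X → X → Prop // IsStrictTotalOrder X r})
    (j : {r : X → X → Prop // IsStrictTotalOrder X r})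
    (hub : ∀ q ∈ Q, OrdLe ltp q j)
    (hlub : ∀ b, (∀ q ∈ Q, OrdLe ltp q b) → OrdLe ltp j b) :
    ∀ x y, ltp x y →
      ((x, y) ∈ OrdL ltp j ↔
        ∃ (m : ℕ) (t : ℕ → X), 0 < m ∧ t 0 = x ∧ t m = y ∧
          ∀ i < m, ltp (t i) (t (i + 1)) ∧ ∃ q ∈ Q, (t i, t (i + 1)) ∈ OrdL ltp q) := by
  classical
  intro x y hxy
  set S := Step ltp Q with hS
  haveI hj := j.2
  -- asymmetry helpers
  have pasymm : ∀ {a b : X}, ltp a b → ltp b a → False := fun h1 h2 =>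
    irrefl _ (_root_.trans h1 h2)
  constructor
  · rintro ⟨-, hjyx⟩
    -- It suffices to show the transitive closure holds
    refine chain_of_tg ltp Q ?_
    by_contra hC
    -- define the candidate upper bound b
    set b : X → X → Prop := fun a c =>
      (ltp a c ∧ ¬ Relation.TransGen S a c) ∨ (ltp c a ∧ Relation.TransGen S c a) with hbdef
    have hb : IsStrictTotalOrder X b := by
      refine { trichotomous := ?_, irrefl := ?_, trans := ?_ }
      · intro a c hac hca
        rcases trichotomous_of ltp a c with h1 | h1 | h1
        · by_cases h2 : Relation.TransGen S a c
          · exact absurd (Or.inr ⟨h1, h2⟩) hca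
          · exact absurd (Or.inl ⟨h1, h2⟩) hac
        · exact h1
        · by_cases h2 : Relation.TransGen S c a
          · exact absurd (Or.inr ⟨h1, h2⟩) hac
          · exact absurd (Or.inl ⟨h1, h2⟩) hca
      · rintro a (⟨h1, -⟩ | ⟨h1, -⟩) <;> exact irrefl a h1
      · rintro a b' c (⟨pab, nab⟩ | ⟨pba, tba⟩) (⟨pbc, nbc⟩ | ⟨pcb, tcb⟩)
        · refine Or.inl ⟨_root_.trans pab pbc, fun h => ?_⟩
          rcases tg_split ltp Q h pab pbc with h' | h'
          exacts [nab h', nbc h']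
        · rcases trichotomous_of ltp a c with h1 | h1 | h1
          · refine Or.inl ⟨h1, fun h => nab (h.trans tcb)⟩
          · subst h1; exact absurd tcb nab
          · rcases tg_split ltp Q tcb h1 pab with h' | h'
            · exact Or.inr ⟨h1, h'⟩
            · exact absurd h' nab
        · rcases trichotomous_of ltp a c with h1 | h1 | h1
          · refine Or.inl ⟨h1, fun h => nbc (tba.trans h)⟩
          · subst h1; exact absurd tba nbc
          · rcases tg_split ltp Q tba pbc h1 with h' | h'
            · exact absurd h' nbc
            · exact Or.inr ⟨h1, h'⟩
        · exact Or.inr ⟨_root_.trans pcb pba, tcb.trans tba⟩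
    -- b is an upper bound for Q
    have hbub : ∀ q ∈ Q, OrdLe ltp q ⟨b, hb⟩ := by
      intro q hq a c hac hbac
      haveI := q.2
      have hnc : ¬ Relation.TransGen S a c := by
        rcases hbac with ⟨-, h⟩ | ⟨h, -⟩
        · exact h
        · exact absurd h (fun h' => pasymm hac h')
      rcases trichotomous_of q.val a c with h1 | h1 | h1
      · exact h1
      · subst h1; exact absurd hac (irrefl a)
      · exact absurd (Relation.TransGen.single ⟨hac, q, hq, hac, h1⟩) hnc
    -- hence j ≤ b, contradicting j y x
    have hjb := hlub ⟨b, hb⟩ hbub x y hxy (Or.inl ⟨hxy, hC⟩)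
    exact absurd hjyx (fun h => irrefl _ (hj.trans _ _ _ hjb h))
  · intro h
    refine ⟨hxy, ?_⟩
    -- from the chain, j reverses each step, hence reverses x y
    have key : ∀ {a c : X}, Relation.TransGen S a c → j.val c a := by
      intro a c htg
      induction htg with
      | single h =>
        obtain ⟨hac, q, hq, hmem⟩ := h
        haveI := q.2
        rcases trichotomous_of j.val _ _ with h1 | h1 | h1
        · exact absurd (hub q hq _ _ hac h1) (fun h' => irrefl _ (_root_.trans hmem.2 h'))
        · subst h1; exact absurd hac (irrefl _)
        · exact h1
      | tail htg hbc ih =>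
        obtain ⟨hac, q, hq, hmem⟩ := hbc
        haveI := q.2
        rcases trichotomous_of j.val _ _ with h1 | h1 | h1
        · exact absurd (hub q hq _ _ hac h1) (fun h' => irrefl _ (_root_.trans hmem.2 h'))
        · subst h1; exact absurd hac (irrefl _)
        · exact hj.trans _ _ _ h1 ih
    exact key (tg_of_chain ltp Q h)
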